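/- Lower bound of DTW: for subsequences U_{i,ω_U} and W_{j,ω_W} with ω_U ≥ ω_W, the sum over k from i to i+ω_U-1 of the minimum of dist(u_k, w_l) over l ∈ [j..j+ω_W-1] is less than or equal to DTW(U_{i,ω_U}, W_{j,ω_W}). -/
import Mathlib


/-- A warping path between `U[a,b]` and `W[c,d]`, represented as a function
`p : ℕ → ℕ × ℕ` with length `n`: it starts at `(a,c)`, ends at `(b,d)`,
stays inside `[a..b] × [c..d]`, and consecutive differences lie in
`{(0,1),(1,0),(1,1)}`. -/
def IsWarpingPath (a b c d n : ℕ) (p : ℕ → ℕ × ℕ) : Prop :=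
  1 ≤ n ∧ p 0 = (a, c) ∧ p (n - 1) = (b, d) ∧
  (∀ k < n, a ≤ (p k).1 ∧ (p k).1 ≤ b ∧ c ≤ (p k).2 ∧ (p k).2 ≤ d) ∧
  (∀ k, k + 1 < n →
    ((p (k + 1)).1 = (p k).1 ∧ (p (k + 1)).2 = (p k).2 + 1) ∨
    ((p (k + 1)).1 = (p k).1 + 1 ∧ (p (k + 1)).2 = (p k).2) ∨
    ((p (k + 1)).1 = (p k).1 + 1 ∧ (p (k + 1)).2 = (p k).2 + 1))

/-- The distance along a warping path: `Σ_{(k,l) ∈ P} dist(u_k, w_l)`. -/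
noncomputable def DistSub {F : Type*} (dist : F → F → ℝ) (u w : ℕ → F)
    (n : ℕ) (p : ℕ → ℕ × ℕ) : ℝ :=
  ∑ k ∈ Finset.range n, dist (u (p k).1) (w (p k).2)

/-- DTW distance between `U[a,b]` and `W[c,d]`: the minimum (infimum) of the
path distances over all warping paths. -/
noncomputable def DTW {F : Type*} (dist : F → F → ℝ) (u w : ℕ → F)
    (a b c d : ℕ) : ℝ :=
  sInf {x : ℝ | ∃ n p, IsWarpingPath a b c d n p ∧ x = DistSub dist u w n p}

/-- Lower bound of DTW: `Σ_{k=i}^{i+ωU-1} min_{l ∈ [j..j+ωW-1]} dist(u_k, w_l)`. -/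
noncomputable def DTWL {F : Type*} (dist : F → F → ℝ) (u w : ℕ → F)
    (i j ωU ωW : ℕ) (hW : 0 < ωW) : ℝ :=
  ∑ k ∈ Finset.Icc i (i + ωU - 1),
    (Finset.Icc j (j + ωW - 1)).inf'
      (Finset.nonempty_Icc.mpr (by omega)) (fun l => dist (u k) (w l))

/-- Upper bound of DTW:
`Σ_{k=0}^{ωW-2} dist(u_{i+k}, w_{j+k}) + Σ_{k=ωW-1}^{ωU-1} dist(u_{i+k}, w_{j+ωW-1})`. -/
noncomputable def DTWup {F : Type*} (dist : F → F → ℝ) (u w : ℕ → F)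
    (i j ωU ωW : ℕ) : ℝ :=
  ∑ k ∈ Finset.range (ωW - 1), dist (u (i + k)) (w (j + k)) +
  ∑ k ∈ Finset.Icc (ωW - 1) (ωU - 1), dist (u (i + k)) (w (j + (ωW - 1)))

lemma discrete_ivt (q : ℕ → ℕ) (n a b : ℕ) (hn : 1 ≤ n) (h0 : q 0 = a)
    (hlast : q (n - 1) = b)
    (hstep : ∀ k, k + 1 < n → q (k + 1) = q k ∨ q (k + 1) = q k + 1)
    (m : ℕ) (h1 : a ≤ m) (h2 : m ≤ b) : ∃ k < n, q k = m := by
  classical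
  have hex : ∃ k, k < n ∧ m ≤ q k := ⟨n - 1, by omega, by omega⟩
  obtain ⟨hk0n, hk0m⟩ := Nat.find_spec hex
  set k0 := Nat.find hex with hk0
  refine ⟨k0, hk0n, ?_⟩
  rcases Nat.eq_zero_or_pos k0 with h | h
  · rw [h] at hk0m ⊢; omega
  · have hprev := Nat.find_min hex (m := k0 - 1) (by omega)
    push_neg at hprev
    have hlt : q (k0 - 1) < m := by
      by_contra hc; exact absurd (hprev (by omega)) (by omega)
    have hs := hstep (k0 - 1) (by omega)
    have hk : k0 - 1 + 1 = k0 := by omega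
    rw [hk] at hs
    rcases hs with hs | hs <;> omega

/-- Lower bound of DTW: `DTW_L(U_{i,ωU}, W_{j,ωW}) ≤ DTW(U_{i,ωU}, W_{j,ωW})`
for `ωU ≥ ωW ≥ 1` and a nonnegative distance function. -/
theorem DTWL_le_DTW {F : Type*} (dist : F → F → ℝ) (hd : ∀ x y, 0 ≤ dist x y)
    (u w : ℕ → F) (i j ωU ωW : ℕ) (hW : 0 < ωW) (hUW : ωW ≤ ωU) :
    DTWL dist u w i j ωU ωW hW ≤ DTW dist u w i (i + ωU - 1) j (j + ωW - 1) := by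
  classical
  set b := i + ωU - 1 with hb
  set d := j + ωW - 1 with hdd
  apply le_csInf
  · -- nonempty: explicit path
    refine ⟨DistSub dist u w ωU (fun k => (i + k, j + min k (ωW - 1))), ωU,
      fun k => (i + k, j + min k (ωW - 1)), ?_, rfl⟩
    refine ⟨by omega, by simp, ?_, ?_, ?_⟩
    · simp only [Prod.mk.injEq]
      constructor <;> omega
    · intro k hk
      simp only
      refine ⟨by omega, by omega, by omega, by omega⟩
    · intro k hk
      simp only
      rcases Nat.lt_or_ge k (ωW - 1) with h | h
      · right; right; constructor <;> omega
      · right; left; constructor <;> omega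
  · rintro x ⟨n, p, ⟨hn, h0, hlast, hin, hstep⟩, rfl⟩
    have key : ∀ m, ∃ k, (i ≤ m → m ≤ b → k < n ∧ (p k).1 = m) := by
      intro m
      rcases Nat.lt_or_ge m i with h | h
      · exact ⟨0, by omega⟩
      rcases Nat.lt_or_ge b m with h' | h'
      · exact ⟨0, by omega⟩
      obtain ⟨k, hk, hk'⟩ := discrete_ivt (fun k => (p k).1) n i b hn
        (congrArg Prod.fst h0) (congrArg Prod.fst hlast)
        (fun k hk => by
          show (p (k+1)).1 = (p k).1 ∨ (p (k+1)).1 = (p k).1 + 1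
          rcases hstep k hk with ⟨h1, _⟩ | ⟨h1, _⟩ | ⟨h1, _⟩ <;> omega)
        m h h'
      exact ⟨k, fun _ _ => ⟨hk, hk'⟩⟩
    choose g hg using key
    have hgn : ∀ m ∈ Finset.Icc i b, g m < n := by
      intro m hm; rw [Finset.mem_Icc] at hm; exact (hg m hm.1 hm.2).1
    have hg1 : ∀ m ∈ Finset.Icc i b, (p (g m)).1 = m := by
      intro m hm; rw [Finset.mem_Icc] at hm; exact (hg m hm.1 hm.2).2
    have hinj : Set.InjOn g (Finset.Icc i b) := by
      intro m1 hm1 m2 hm2 he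
      rw [← hg1 m1 hm1, ← hg1 m2 hm2, he]
    calc DTWL dist u w i j ωU ωW hW
        ≤ ∑ m ∈ Finset.Icc i b, dist (u (p (g m)).1) (w (p (g m)).2) := by
          apply Finset.sum_le_sum
          intro m hm
          rw [hg1 m hm]
          apply Finset.inf'_le
          rw [Finset.mem_Icc]
          have := hin (g m) (hgn m hm)
          exact ⟨this.2.2.1, this.2.2.2⟩
      _ = ∑ k ∈ (Finset.Icc i b).image g, dist (u (p k).1) (w (p k).2) :=
          (Finset.sum_image (f := fun k => dist (u (p k).1) (w (p k).2)) (fun m1 h1 m2 h2 he => hinj h1 h2 he)).symm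
      _ ≤ ∑ k ∈ Finset.range n, dist (u (p k).1) (w (p k).2) := by
          apply Finset.sum_le_sum_of_subset_of_nonneg
          · intro k hk
            rw [Finset.mem_range]
            obtain ⟨m, hm, rfl⟩ := Finset.mem_image.mp hk
            exact hgn m hm
          · intro k _ _; exact hd _ _
      _ = DistSub dist u w n p := rfl
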